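/- arXiv:1105.1936 — 2 statements merged into one kernel-verified Lean document; each statement's English description precedes it below -/
import Mathlib

section
/- Let (u,v) : I → (−1,1) × ℝ be a solution of the ODE u' = v, v' = −νv + 4uv(v + B/√2)/(1−u²) + u, with B > 0, and suppose at some time t₀ ∈ I we have u(t₀) < 0 and v(t₀) < 0. Then for all t ∈ I with t ≥ t₀, u(t) ≤ u(t₀) < 0 and v(t) ≤ 0; in particular u is nonincreasing on [t₀, ∞) ∩ I. (The quadrant {U ≤ 0, V ≤ 0} is forward invariant.) -/
/-!
At a first time `c > t₀` where `v` returns to `0`, the nonlinear term of the equation for `v'`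
vanishes, so `v'(c) = u(c)`. Since `u' = v ≤ 0` on `[t₀, c]`, we get `u(c) ≤ u(t₀) < 0`,
whereas `v < 0 = v(c)` just before `c` forces `v'(c) ≥ 0`. Hence `v` stays negative, and `u`
is antitone on `[t₀, ∞) ∩ I`.
-/

open Real Set

lemma antitoneOn_of_hasDerivAt_nonpos {D : Set ℝ} (hD : Convex ℝ D) {f f' : ℝ → ℝ}
    (hf : ∀ x ∈ D, HasDerivAt f (f' x) x) (hf' : ∀ x ∈ D, f' x ≤ 0) : AntitoneOn f D :=
  antitoneOn_of_hasDerivWithinAt_nonpos hD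
    (fun x hx ↦ (hf x hx).continuousAt.continuousWithinAt)
    (fun x hx ↦ (hf x (interior_subset hx)).hasDerivWithinAt)
    (fun x hx ↦ hf' x (interior_subset hx))

lemma exists_first_zero_of_neg_of_nonneg {v : ℝ → ℝ} {a b : ℝ} (hab : a ≤ b)
    (hv : ContinuousOn v (Icc a b)) (ha : v a < 0) (hb : 0 ≤ v b) :
    ∃ c ∈ Ioc a b, v c = 0 ∧ ∀ s ∈ Ico a c, v s < 0 := by
  set A := Icc a b ∩ v ⁻¹' Ici 0
  have hbdd : BddBelow A := ⟨a, fun _ hx ↦ hx.1.1⟩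
  have hcA : sInf A ∈ A :=
    (hv.preimage_isClosed_of_isClosed isClosed_Icc isClosed_Ici).csInf_mem
      ⟨b, ⟨⟨hab, le_rfl⟩, hb⟩⟩ hbdd
  set c := sInf A
  obtain ⟨⟨hac, hcb⟩, hc⟩ := hcA
  have hbefore : ∀ s ∈ Icc a b, 0 ≤ v s → c ≤ s := fun s hs hvs ↦ csInf_le hbdd ⟨hs, hvs⟩
  have hac' : a < c := hac.lt_of_ne fun h ↦ (h ▸ ha).not_ge hc
  obtain ⟨s, ⟨has, hsc⟩, hs⟩ := intermediate_value_Icc hac (hv.mono (Icc_subset_Icc_right hcb))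
    ⟨ha.le, hc⟩
  have hsc' : s = c := hsc.antisymm (hbefore s ⟨has, hsc.trans hcb⟩ hs.ge)
  refine ⟨c, ⟨hac', hcb⟩, hsc' ▸ hs, fun s hs ↦ lt_of_not_ge fun hvs ↦ ?_⟩
  exact hs.2.not_ge (hbefore s ⟨hs.1, hs.2.le.trans hcb⟩ hvs)

lemma HasDerivAt.nonneg_of_isMaxOn_Icc {f : ℝ → ℝ} {f' a c : ℝ} (hac : a < c)
    (hf : HasDerivAt f f' c) (hmax : IsMaxOn f (Icc a c) c) : 0 ≤ f' := by
  have hcone : a - c ∈ posTangentConeAt (Icc a c) c :=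
    sub_mem_posTangentConeAt_of_segment_subset (segment_eq_Icc' c a ▸ by simp [hac.le])
  have hslope := hmax.localize.hasFDerivWithinAt_nonpos hf.hasFDerivAt.hasFDerivWithinAt hcone
  simp only [ContinuousLinearMap.toSpanSingleton_apply, smul_eq_mul] at hslope
  exact nonneg_of_mul_nonpos_right hslope (sub_neg.mpr hac)

lemma neg_of_hasDerivAt_neg_at_first_zero {I : Set ℝ} (hI : I.OrdConnected) {v v' : ℝ → ℝ}
    (hv : ∀ t ∈ I, HasDerivAt v (v' t) t) {t₀ : ℝ} (ht₀ : t₀ ∈ I) (hv₀ : v t₀ < 0)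
    (hcross : ∀ c ∈ I, t₀ < c → v c = 0 → (∀ s ∈ Icc t₀ c, v s ≤ 0) → v' c < 0) :
    ∀ t ∈ I, t₀ ≤ t → v t < 0 := by
  intro t ht htt
  by_contra! hvt
  have hsub : Icc t₀ t ⊆ I := hI.out ht₀ ht
  obtain ⟨c, ⟨htc, hct⟩, hvc, hneg⟩ := exists_first_zero_of_neg_of_nonneg htt
    (fun s hs ↦ (hv s (hsub hs)).continuousAt.continuousWithinAt) hv₀ hvt
  have hle : ∀ s ∈ Icc t₀ c, v s ≤ 0 := fun s hs ↦
    hs.2.eq_or_lt.elim (fun h ↦ (h ▸ hvc).le) fun h ↦ (hneg s ⟨hs.1, h⟩).le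
  have hcI : c ∈ I := hsub ⟨htc.le, hct⟩
  exact (hcross c hcI htc hvc hle).not_ge
    ((hv c hcI).nonneg_of_isMaxOn_Icc htc fun s hs ↦ hvc ▸ hle s hs)

theorem third_quadrant_forward_invariant_general (ν B : ℝ)
    (I : Set ℝ) (hI : I.OrdConnected)
    (u v : ℝ → ℝ)
    (hu : ∀ t ∈ I, HasDerivAt u (v t) t)
    (hv : ∀ t ∈ I, HasDerivAt v
      (-ν * v t + 4 * u t * v t * (v t + B / Real.sqrt 2) / (1 - (u t) ^ 2) + u t) t)
    (t₀ : ℝ) (ht₀ : t₀ ∈ I) (hu0 : u t₀ < 0) (hv0 : v t₀ < 0) :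
    (∀ t ∈ I, t₀ ≤ t → u t ≤ u t₀ ∧ v t ≤ 0) ∧
      AntitoneOn u ({t | t₀ ≤ t} ∩ I) := by
  have hu_le : ∀ t ∈ I, t₀ ≤ t → (∀ s ∈ Icc t₀ t, v s ≤ 0) → u t ≤ u t₀ := fun t ht htt hvt ↦
    antitoneOn_of_hasDerivAt_nonpos (convex_Icc t₀ t) (fun s hs ↦ hu s (hI.out ht₀ ht hs)) hvt
      ⟨le_rfl, htt⟩ ⟨htt, le_rfl⟩ htt
  have hv_neg : ∀ t ∈ I, t₀ ≤ t → v t < 0 :=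
    neg_of_hasDerivAt_neg_at_first_zero hI hv ht₀ hv0 fun c hc htc hvc hle ↦ by
      simpa [hvc] using (hu_le c hc htc.le hle).trans_lt hu0
  have hu_anti : AntitoneOn u ({t | t₀ ≤ t} ∩ I) :=
    antitoneOn_of_hasDerivAt_nonpos ((convex_Ici t₀).inter hI.convex)
      (fun t ht ↦ hu t ht.2) fun t ht ↦ (hv_neg t ht.2 ht.1).le
  exact ⟨fun t ht htt ↦ ⟨hu_anti ⟨le_refl t₀, ht₀⟩ ⟨htt, ht⟩ htt, (hv_neg t ht htt).le⟩, hu_anti⟩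

theorem third_quadrant_forward_invariant (ν B : ℝ) (hB : 0 < B)
    (I : Set ℝ) (hI : I.OrdConnected)
    (u v : ℝ → ℝ)
    (hu : ∀ t ∈ I, HasDerivAt u (v t) t)
    (hv : ∀ t ∈ I, HasDerivAt v
      (-ν * v t + 4 * u t * v t * (v t + B / Real.sqrt 2) / (1 - (u t) ^ 2) + u t) t)
    (hrange : ∀ t ∈ I, u t ∈ Ioo (-1 : ℝ) 1)
    (t₀ : ℝ) (ht₀ : t₀ ∈ I) (hu0 : u t₀ < 0) (hv0 : v t₀ < 0) :
    (∀ t ∈ I, t₀ ≤ t → u t ≤ u t₀ ∧ v t ≤ 0) ∧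
      AntitoneOn u ({t | t₀ ≤ t} ∩ I) :=
  third_quadrant_forward_invariant_general ν B I hI u v hu hv t₀ ht₀ hu0 hv0
end

section
/- Let A, B > 0 with A(1+B²) > 1, and define φ(t,x,v) = λ·exp(−(√(A(1+B²)) − 1)·t)·exp(−(1/2)·√(A/(1+B²))·(v − Bx)²) for a constant λ > 0. Then φ is a classical solution of ∂ₜφ − Δₓφ − Δᵥφ = (1 − A(v−Bx)²)·φ on ℝ⁺ × ℝ × ℝ. -/
open Real

/-- Time partial derivative. -/
noncomputable def dt (u : ℝ → ℝ → ℝ → ℝ) (t x v : ℝ) : ℝ :=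
  deriv (fun s => u s x v) t

/-- Second partial derivative in `x`. -/
noncomputable def dxx (u : ℝ → ℝ → ℝ → ℝ) (t x v : ℝ) : ℝ :=
  deriv (deriv (fun y => u t y v)) x

/-- Second partial derivative in `v`. -/
noncomputable def dvv (u : ℝ → ℝ → ℝ → ℝ) (t x v : ℝ) : ℝ :=
  deriv (deriv (fun w => u t x w)) v

/-!
Along each coordinate line φ is a constant times `exp (-(c/2) ℓ²)` with `ℓ` affine,
`c = √(A/(1+B²))`. Such a Gaussian has second derivative `(c²b²ℓ² - cb²)` times itself,
`b` being the slope of `ℓ`; the slopes are `-B` in `x` and `1` in `v`, so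
`-Δₓφ - Δᵥφ = (c(1+B²) - c²(1+B²)(v-Bx)²) φ = (√(A(1+B²)) - A(v-Bx)²) φ`,
and the time factor contributes `1 - √(A(1+B²))`.
-/

theorem Real.sqrt_div_mul_self {d : ℝ} (hd : 0 ≤ d) (a : ℝ) : √(a / d) * d = √(a * d) := by
  rw [← sqrt_sq hd, ← sqrt_mul' _ (sq_nonneg d), sqrt_sq hd]
  rcases eq_or_ne d 0 with rfl | hd₀
  · simp
  · field_simp

section AffineGaussian

variable {ℓ : ℝ → ℝ} {b : ℝ}

theorem hasDerivAt_exp_neg_half_mul_sq {w : ℝ} (hℓ : HasDerivAt ℓ b w) (c : ℝ) :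
    HasDerivAt (fun w => exp (-(1 / 2) * c * ℓ w ^ 2))
      (-(c * b * ℓ w) * exp (-(1 / 2) * c * ℓ w ^ 2)) w := by
  convert ((hℓ.fun_pow 2).const_mul (-(1 / 2) * c)).exp using 1
  push_cast
  ring

theorem deriv_deriv_const_mul_exp_neg_half_mul_sq (hℓ : ∀ w, HasDerivAt ℓ b w) (K c w : ℝ) :
    deriv (deriv fun w => K * exp (-(1 / 2) * c * ℓ w ^ 2)) w
      = (c ^ 2 * b ^ 2 * ℓ w ^ 2 - c * b ^ 2) * (K * exp (-(1 / 2) * c * ℓ w ^ 2)) := by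
  have hderiv : deriv (fun w => K * exp (-(1 / 2) * c * ℓ w ^ 2))
      = fun w => K * (-(c * b * ℓ w) * exp (-(1 / 2) * c * ℓ w ^ 2)) :=
    funext fun w => ((hasDerivAt_exp_neg_half_mul_sq (hℓ w) c).const_mul K).deriv
  rw [hderiv, ((((hℓ w).const_mul (c * b)).fun_neg.fun_mul
    (hasDerivAt_exp_neg_half_mul_sq (hℓ w) c)).const_mul K).deriv]
  ring

end AffineGaussian

theorem gaussian_supersolution_general (A B lam : ℝ) (hA : 0 < A) :
    ∀ t x v : ℝ, 0 ≤ t →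
      let φ : ℝ → ℝ → ℝ → ℝ := fun t x v =>
        lam * Real.exp (-(Real.sqrt (A * (1 + B ^ 2)) - 1) * t) *
          Real.exp (-(1 / 2) * Real.sqrt (A / (1 + B ^ 2)) * (v - B * x) ^ 2)
      dt φ t x v - dxx φ t x v - dvv φ t x v
        = (1 - A * (v - B * x) ^ 2) * φ t x v := by
  intro t x v _ φ
  have hB : 0 < 1 + B ^ 2 := by positivity
  set c := √(A / (1 + B ^ 2))
  have hc_sq : c ^ 2 * (1 + B ^ 2) = A := by
    rw [sq_sqrt (by positivity), div_mul_cancel₀ _ hB.ne']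
  have hc_mul : c * (1 + B ^ 2) = √(A * (1 + B ^ 2)) := sqrt_div_mul_self hB.le A
  have hdt : dt φ t x v = -(√(A * (1 + B ^ 2)) - 1) * φ t x v := by
    change deriv (fun s => φ s x v) t = _
    rw [(((hasDerivAt_const_mul _).exp.const_mul lam).mul_const _).deriv]
    ring
  have hdxx : dxx φ t x v = (c ^ 2 * (-B) ^ 2 * (v - B * x) ^ 2 - c * (-B) ^ 2) * φ t x v :=
    deriv_deriv_const_mul_exp_neg_half_mul_sq
      (fun _ => (hasDerivAt_const_mul B).const_sub v) _ c x
  have hdvv : dvv φ t x v = (c ^ 2 * 1 ^ 2 * (v - B * x) ^ 2 - c * 1 ^ 2) * φ t x v :=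
    deriv_deriv_const_mul_exp_neg_half_mul_sq
      (fun w => (hasDerivAt_id w).sub_const (B * x)) _ c v
  rw [hdt, hdxx, hdvv]
  linear_combination φ t x v * hc_mul - φ t x v * (v - B * x) ^ 2 * hc_sq

theorem gaussian_supersolution (A B lam : ℝ) (hA : 0 < A) (hB : 0 < B)
    (hlam : 0 < lam) (hAB : A * (1 + B ^ 2) > 1) :
    ∀ t x v : ℝ, 0 ≤ t →
      let φ : ℝ → ℝ → ℝ → ℝ := fun t x v =>
        lam * Real.exp (-(Real.sqrt (A * (1 + B ^ 2)) - 1) * t) *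
          Real.exp (-(1 / 2) * Real.sqrt (A / (1 + B ^ 2)) * (v - B * x) ^ 2)
      dt φ t x v - dxx φ t x v - dvv φ t x v
        = (1 - A * (v - B * x) ^ 2) * φ t x v :=
  gaussian_supersolution_general A B lam hA
end
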